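/- Let M : Fin k → ℝ^{m} be a family of vectors, A ⊆ Fin m a set of row indices, and F : Fin k → Fin m a strictly monotone map with F j ∈ A and supp(M j) ∩ A ⊆ {F j} for every j. Then for all indices j < j' one has (gramSchmidt ℝ M j)(F j') = 0; i.e., the entry of the Q-factor in row F_{j'} and column j vanishes whenever j < j'. -/

import Mathlib

/-- Shortcut instance (the instance exists in Mathlib; restated to help elaboration). -/
instance (priority := high) finWellFoundedLT (n : ℕ) : WellFoundedLT (Fin n) :=
  inferInstance

/-- The nonzero structure (support) of a vector of `ℝ^k`: the set of indices of its
nonzero entries. -/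
def supp {k : ℕ} (x : EuclideanSpace ℝ (Fin k)) : Set (Fin k) := {t | x t ≠ 0}

/-!
The `j`-th Gram–Schmidt vector is a combination of `M 0, …, M j`. For `i ≤ j < j'` the row
`F j'` lies in `A` but differs from `F i` by strict monotonicity, so `M i` vanishes there, and
hence so does every combination of these columns.
-/

open InnerProductSpace

theorem InnerProductSpace.gramSchmidt_mem_ker {𝕜 E ι : Type*} [RCLike 𝕜] [NormedAddCommGroup E]
    [InnerProductSpace 𝕜 E] [LinearOrder ι] [LocallyFiniteOrderBot ι] [WellFoundedLT ι]
    (f : ι → E) (φ : E →ₗ[𝕜] 𝕜) {j : ι} (hf : ∀ i ≤ j, f i ∈ LinearMap.ker φ) :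
    gramSchmidt 𝕜 f j ∈ LinearMap.ker φ := by
  have hspan : Submodule.span 𝕜 (f '' Set.Iic j) ≤ LinearMap.ker φ :=
    Submodule.span_le.2 <| Set.image_subset_iff.2 fun i hi => hf i hi
  exact hspan (gramSchmidt_mem_span 𝕜 f le_rfl)

theorem apply_eq_zero_of_supp_inter_subset_singleton {m : ℕ} {x : EuclideanSpace ℝ (Fin m)}
    {A : Set (Fin m)} {s t : Fin m} (hx : supp x ∩ A ⊆ {s}) (ht : t ∈ A) (hts : t ≠ s) :
    x t = 0 := by
  by_contra hne
  exact hts (hx ⟨hne, ht⟩)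

/-- Second part of Corollary 3: if `F` is strictly monotone with `F j ∈ A`, and within the
rows `A` each column `M j` has at most one nonzero entry, in row `F j`, then the entry of the
Q-factor (Gram–Schmidt vectors) in row `F j'` and column `j` vanishes whenever `j < j'`. -/
theorem gramSchmidt_selected_row_upper_zero (k m : ℕ)
    (M : Fin k → EuclideanSpace ℝ (Fin m)) (A : Set (Fin m)) (F : Fin k → Fin m)
    (hmono : StrictMono F) (hFA : ∀ j, F j ∈ A)
    (hsupp : ∀ j, supp (M j) ∩ A ⊆ {F j}) :
    ∀ j j' : Fin k, j < j' → InnerProductSpace.gramSchmidt ℝ M j (F j') = 0 := by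
  intro j j' hjj'
  let row : EuclideanSpace ℝ (Fin m) →ₗ[ℝ] ℝ := (EuclideanSpace.proj (F j')).toLinearMap
  have hcols : ∀ i ≤ j, M i ∈ LinearMap.ker row := fun i hi =>
    apply_eq_zero_of_supp_inter_subset_singleton (hsupp i) (hFA j')
      (hmono (hi.trans_lt hjj')).ne'
  exact gramSchmidt_mem_ker M row hcols
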